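/- arXiv:2405.08235 — 2 statements merged into one kernel-verified Lean document; each statement's English description precedes it below -/
import Mathlib

section
/- For two p×p real symmetric matrices E1 and E2 with eigenvalues λ1^(1) ≤ ... ≤ λp^(1) and λ1^(2) ≤ ... ≤ λp^(2) respectively, the sum over i of |λi^(1) − λi^(2)|² is at most the squared Frobenius norm of E1 − E2. -/
open Matrix Finset

private lemma trace_prod {p : ℕ} (A B : Matrix (Fin p) (Fin p) ℝ) :
    (A * B).trace = ∑ i, ∑ j, A i j * B j i := by
  simp [Matrix.trace, Matrix.mul_apply, Matrix.diag]

/-- Hoffman–Wielandt inequality for real symmetric matrices: the sum of squared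
differences of increasingly-ordered eigenvalues is bounded by the squared
Frobenius norm of the difference. -/
theorem hoffman_wielandt_symmetric (p : ℕ)
    (E1 E2 : Matrix (Fin p) (Fin p) ℝ)
    (h1 : E1.IsHermitian) (h2 : E2.IsHermitian)
    (μ1 μ2 : Fin p → ℝ) (hm1 : Monotone μ1) (hm2 : Monotone μ2)
    (σ1 σ2 : Equiv.Perm (Fin p))
    (hσ1 : μ1 = h1.eigenvalues ∘ σ1) (hσ2 : μ2 = h2.eigenvalues ∘ σ2) :
    ∑ i, |μ1 i - μ2 i| ^ 2 ≤ ∑ i, ∑ j, (E1 i j - E2 i j) ^ 2 := by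
  set d1 := h1.eigenvalues with hd1
  set d2 := h2.eigenvalues with hd2
  set U : Matrix (Fin p) (Fin p) ℝ := (h1.eigenvectorUnitary : Matrix (Fin p) (Fin p) ℝ) with hU
  set V : Matrix (Fin p) (Fin p) ℝ := (h2.eigenvectorUnitary : Matrix (Fin p) (Fin p) ℝ) with hV
  have hUU : U * star U = 1 := mem_unitaryGroup_iff.mp h1.eigenvectorUnitary.2
  have hUU' : star U * U = 1 := mem_unitaryGroup_iff'.mp h1.eigenvectorUnitary.2
  have hVV : V * star V = 1 := mem_unitaryGroup_iff.mp h2.eigenvectorUnitary.2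
  have hVV' : star V * V = 1 := mem_unitaryGroup_iff'.mp h2.eigenvectorUnitary.2
  set W : Matrix (Fin p) (Fin p) ℝ := star U * V with hW
  have hWW : W * star W = 1 := by
    rw [hW, Matrix.star_mul, star_star, Matrix.mul_assoc, ← Matrix.mul_assoc V, hVV,
      Matrix.one_mul, hUU']
  have hWW' : star W * W = 1 := by
    rw [hW, Matrix.star_mul, star_star, Matrix.mul_assoc, ← Matrix.mul_assoc U, hUU,
      Matrix.one_mul, hVV']
  -- diagonalization
  have hA : star U * E1 * U = Matrix.diagonal d1 := by
    have := h1.conjStarAlgAut_star_eigenvectorUnitary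
    simpa using this
  have hB : star V * E2 * V = Matrix.diagonal d2 := by
    have := h2.conjStarAlgAut_star_eigenvectorUnitary
    simpa using this
  have hE2' : star U * E2 * U = W * Matrix.diagonal d2 * star W := by
    have hE2 : E2 = V * Matrix.diagonal d2 * star V := by
      rw [← hB]
      have : V * (star V * E2 * V) * star V = V * star V * E2 * (V * star V) := by
        simp only [Matrix.mul_assoc]
      rw [this, hVV, Matrix.one_mul, Matrix.mul_one]
    rw [hE2, hW, Matrix.star_mul, star_star]
    simp only [Matrix.mul_assoc]
  -- trace of products of conjugates
  have conj_mul : ∀ M N : Matrix (Fin p) (Fin p) ℝ,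
      (M * N).trace = ((star U * M * U) * (star U * N * U)).trace := by
    intro M N
    have e : (star U * M * U) * (star U * N * U) = star U * (M * N) * U :=
      calc (star U * M * U) * (star U * N * U)
          = star U * (M * (U * star U) * N) * U := by simp only [Matrix.mul_assoc]
        _ = star U * (M * N) * U := by rw [hUU, Matrix.mul_one]
    rw [e, Matrix.trace_mul_cycle, ← Matrix.mul_assoc, hUU, Matrix.one_mul]
  have conj_mulV : ∀ M N : Matrix (Fin p) (Fin p) ℝ,
      (M * N).trace = ((star V * M * V) * (star V * N * V)).trace := by
    intro M N
    have e : (star V * M * V) * (star V * N * V) = star V * (M * N) * V :=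
      calc (star V * M * V) * (star V * N * V)
          = star V * (M * (V * star V) * N) * V := by simp only [Matrix.mul_assoc]
        _ = star V * (M * N) * V := by rw [hVV, Matrix.mul_one]
    rw [e, Matrix.trace_mul_cycle, ← Matrix.mul_assoc, hVV, Matrix.one_mul]
  -- traces of squares
  have t11 : (E1 * E1).trace = ∑ i, d1 i ^ 2 := by
    rw [conj_mul, hA, trace_prod]
    simp [Matrix.diagonal_apply, ite_mul, mul_ite, zero_mul, mul_zero, Finset.sum_ite_eq, sq]
  have t22 : (E2 * E2).trace = ∑ i, d2 i ^ 2 := by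
    rw [conj_mulV, hB, trace_prod]
    simp [Matrix.diagonal_apply, ite_mul, mul_ite, zero_mul, mul_zero, Finset.sum_ite_eq, sq]
  -- trace of E1*E2
  have t12 : (E1 * E2).trace = ∑ i, ∑ j, d1 i * d2 j * (W i j) ^ 2 := by
    rw [conj_mul, hA, hE2', trace_prod]
    refine Finset.sum_congr rfl fun i _ => ?_
    simp only [Matrix.mul_apply, Matrix.diagonal_apply, Matrix.star_apply, star_trivial,
      ite_mul, mul_ite, zero_mul, mul_zero, Finset.sum_ite_eq, Finset.sum_ite_eq',
      Finset.mem_univ, if_true]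
    rw [Finset.mul_sum]
    exact Finset.sum_congr rfl fun j _ => by ring
  -- doubly stochastic matrix S
  set S : Matrix (Fin p) (Fin p) ℝ := fun i j => (W i j) ^ 2 with hS
  have hSd : S ∈ doublyStochastic ℝ (Fin p) := by
    rw [mem_doublyStochastic_iff_sum]
    refine ⟨fun i j => sq_nonneg _, fun i => ?_, fun j => ?_⟩
    · have := congrFun (congrFun hWW i) i
      simp only [Matrix.mul_apply, Matrix.star_apply, star_trivial, Matrix.one_apply_eq] at this
      rw [← this]
      exact Finset.sum_congr rfl fun j _ => by rw [hS]; ring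
    · have := congrFun (congrFun hWW' j) j
      simp only [Matrix.mul_apply, Matrix.star_apply, star_trivial, Matrix.one_apply_eq] at this
      rw [← this]
      exact Finset.sum_congr rfl fun i _ => by rw [hS]; ring
  -- bound for permutation matrices
  have perm_bound : ∀ σ : Equiv.Perm (Fin p),
      ∑ i, ∑ j, d1 i * d2 j * (σ.permMatrix ℝ) i j ≤ ∑ i, μ1 i * μ2 i := by
    intro σ
    have step1 : ∑ i, ∑ j, d1 i * d2 j * (σ.permMatrix ℝ) i j = ∑ i, d1 i * d2 (σ i) := by
      refine Finset.sum_congr rfl fun i _ => ?_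
      have : ∀ j, d1 i * d2 j * (σ.permMatrix ℝ) i j
          = if σ i = j then d1 i * d2 j else 0 := by
        intro j
        simp [Equiv.Perm.permMatrix, PEquiv.toMatrix, Equiv.toPEquiv, mul_ite]
      simp only [this, Finset.sum_ite_eq, Finset.mem_univ, if_true]
    rw [step1]
    have step2 : ∑ i, d1 i * d2 (σ i)
        = ∑ i, μ1 i * μ2 ((σ2⁻¹ * σ * σ1 : Equiv.Perm (Fin p)) i) := by
      rw [← Equiv.sum_comp σ1 (fun i => d1 i * d2 (σ i))]
      refine Finset.sum_congr rfl fun i _ => ?_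
      have e1 : d1 (σ1 i) = μ1 i := by rw [hσ1]; rfl
      have e2 : d2 (σ (σ1 i)) = μ2 (σ2⁻¹ (σ (σ1 i))) := by
        rw [hσ2]; simp
      simp only [e1, e2, Equiv.Perm.mul_apply]
    rw [step2]
    exact (hm1.monovary hm2).sum_mul_comp_perm_le_sum_mul
  -- bound for S via Birkhoff
  have hSbound : ∑ i, ∑ j, d1 i * d2 j * S i j ≤ ∑ i, μ1 i * μ2 i := by
    obtain ⟨w, hw0, hw1, hwS⟩ := exists_eq_sum_perm_of_mem_doublyStochastic hSd
    have hSentry : ∀ i j, S i j = ∑ σ : Equiv.Perm (Fin p), w σ * (σ.permMatrix ℝ) i j := by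
      intro i j
      rw [← hwS]
      simp [Matrix.sum_apply]
    calc ∑ i, ∑ j, d1 i * d2 j * S i j
        = ∑ i, ∑ j, ∑ σ : Equiv.Perm (Fin p), w σ * (d1 i * d2 j * (σ.permMatrix ℝ) i j) := by
          refine Finset.sum_congr rfl fun i _ => Finset.sum_congr rfl fun j _ => ?_
          rw [hSentry, Finset.mul_sum]
          exact Finset.sum_congr rfl fun σ _ => by ring
      _ = ∑ σ : Equiv.Perm (Fin p), ∑ i, ∑ j, w σ * (d1 i * d2 j * (σ.permMatrix ℝ) i j) := by
          exact (Finset.sum_congr rfl fun i _ => Finset.sum_comm).trans Finset.sum_comm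
      _ = ∑ σ : Equiv.Perm (Fin p), w σ * ∑ i, ∑ j, d1 i * d2 j * (σ.permMatrix ℝ) i j := by
          simp only [← Finset.mul_sum]
      _ ≤ ∑ σ : Equiv.Perm (Fin p), w σ * ∑ i, μ1 i * μ2 i := by
          refine Finset.sum_le_sum fun σ _ => mul_le_mul_of_nonneg_left (perm_bound σ) (hw0 σ)
      _ = ∑ i, μ1 i * μ2 i := by rw [← Finset.sum_mul, hw1, one_mul]
  -- squares match
  have sq1 : ∑ i, d1 i ^ 2 = ∑ i, μ1 i ^ 2 := by
    rw [hσ1, ← Equiv.sum_comp σ1 (fun i => d1 i ^ 2)]; rfl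
  have sq2 : ∑ i, d2 i ^ 2 = ∑ i, μ2 i ^ 2 := by
    rw [hσ2, ← Equiv.sum_comp σ2 (fun i => d2 i ^ 2)]; rfl
  -- RHS equals trace of square of difference
  have hsym : ∀ i j, (E1 - E2) j i = (E1 - E2) i j := by
    intro i j
    have := (h1.sub h2).apply i j
    simpa using this
  have rhs : ∑ i, ∑ j, (E1 i j - E2 i j) ^ 2 = ((E1 - E2) * (E1 - E2)).trace := by
    rw [trace_prod]
    refine Finset.sum_congr rfl fun i _ => Finset.sum_congr rfl fun j _ => ?_
    rw [hsym i j]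
    simp [Matrix.sub_apply, sq]
  have expand : ((E1 - E2) * (E1 - E2)).trace
      = (E1 * E1).trace - 2 * (E1 * E2).trace + (E2 * E2).trace := by
    have : (E1 - E2) * (E1 - E2) = E1 * E1 - E1 * E2 - E2 * E1 + E2 * E2 := by
      noncomm_ring
    rw [this, Matrix.trace_add, Matrix.trace_sub, Matrix.trace_sub,
      Matrix.trace_mul_comm E2 E1]
    ring
  -- LHS expansion
  have lhs : ∑ i, |μ1 i - μ2 i| ^ 2
      = ∑ i, μ1 i ^ 2 - 2 * ∑ i, μ1 i * μ2 i + ∑ i, μ2 i ^ 2 := by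
    simp only [sq_abs, sub_sq]
    rw [Finset.sum_add_distrib, Finset.sum_sub_distrib, Finset.mul_sum]
    ring_nf
  rw [lhs, rhs, expand, t11, t22, t12, sq1, sq2]
  have : ∑ i, ∑ j, d1 i * d2 j * S i j = ∑ i, ∑ j, d1 i * d2 j * (W i j) ^ 2 := rfl
  linarith [hSbound]
end

section
/- Let M : ℝ^p → ℝ be twice continuously differentiable on an open convex set Ω with Hessian eigenvalues in [λ, Λ], 0 < λ ≤ Λ, and let β̌ ∈ Ω be the unique minimizer of M on Ω. Suppose β, β' ∈ Ω satisfy: M(β') ≤ M(β), and there exist orthogonal complementary projections of the gradient such that ∇M(β') restricted to a subspace V is zero and ∇M(β) restricted to the orthogonal complement of V is zero. Then ‖∇M(β)‖ ≤ Λ‖β − β'‖, and consequently ‖β − β̌‖ ≤ (Λ/λ)‖β − β'‖. -/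
open InnerProductSpace

lemma mvt_fderiv {E : Type*} [NormedAddCommGroup E] [NormedSpace ℝ E]
    {Ω : Set E} (hΩo : IsOpen Ω) (hΩc : Convex ℝ Ω)
    {M : E → ℝ} (hM : ContDiffOn ℝ 2 M Ω)
    {x y : E} (hx : x ∈ Ω) (hy : y ∈ Ω) (u : E) :
    ∃ z ∈ Ω, fderiv ℝ M y u - fderiv ℝ M x u
      = fderiv ℝ (fderiv ℝ M) z (y - x) u := by
  set γ : ℝ → E := fun t => x + t • (y - x) with hγ
  have hmem : ∀ t ∈ Set.Icc (0:ℝ) 1, γ t ∈ Ω := by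
    intro t ht
    have : γ t ∈ segment ℝ x y := by
      rw [segment_eq_image']
      exact ⟨t, ht, rfl⟩
    exact hΩc.segment_subset hx hy this
  have hderiv : ∀ t ∈ Set.Icc (0:ℝ) 1,
      HasDerivAt (fun t => fderiv ℝ M (γ t) u)
        (fderiv ℝ (fderiv ℝ M) (γ t) (y - x) u) t := by
    intro t ht
    have hz : γ t ∈ Ω := hmem t ht
    have h1 : ContDiffAt ℝ 1 (fderiv ℝ M) (γ t) :=
      (hM.contDiffAt (hΩo.mem_nhds hz)).fderiv_right (by norm_num)
    have h2 : HasFDerivAt (fderiv ℝ M) (fderiv ℝ (fderiv ℝ M) (γ t)) (γ t) :=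
      (h1.differentiableAt one_ne_zero).hasFDerivAt
    have hγd : HasDerivAt γ (y - x) t := by
      have : HasDerivAt (fun t : ℝ => t • (y - x)) ((1:ℝ) • (y - x)) t :=
        (hasDerivAt_id t).smul_const (y - x)
      simpa [hγ] using this.const_add x
    have h3 : HasDerivAt (fun t => fderiv ℝ M (γ t))
        (fderiv ℝ (fderiv ℝ M) (γ t) (y - x)) t := h2.comp_hasDerivAt t hγd
    have h4 := h3.clm_apply (hasDerivAt_const t u)
    simpa using h4
  obtain ⟨c, hc, hceq⟩ := exists_hasDerivAt_eq_slope
    (fun t => fderiv ℝ M (γ t) u)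
    (fun t => fderiv ℝ (fderiv ℝ M) (γ t) (y - x) u) one_pos
    (fun t ht => (hderiv t ht).continuousAt.continuousWithinAt)
    (fun t ht => hderiv t (Set.mem_Icc_of_Ioo ht))
  refine ⟨γ c, hmem c (Set.mem_Icc_of_Ioo hc), ?_⟩
  have h0 : γ 0 = x := by simp [hγ]
  have h1 : γ 1 = y := by simp [hγ]
  rw [h0, h1] at hceq
  rw [hceq]
  ring


lemma bilin_bound {E : Type*} [NormedAddCommGroup E] [InnerProductSpace ℝ E]
    {B : E →L[ℝ] E →L[ℝ] ℝ} {lam Lam : ℝ} (hlam : 0 ≤ lam) (hlL : lam ≤ Lam)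
    (hsymm : ∀ v w, B v w = B w v)
    (hlow : ∀ v, lam * ‖v‖ ^ 2 ≤ B v v)
    (hupp : ∀ v, B v v ≤ Lam * ‖v‖ ^ 2)
    (a b : E) : B a b ≤ Lam * (‖a‖ * ‖b‖) := by
  have hLam : 0 ≤ Lam := hlam.trans hlL
  have hhalf : ∀ c d : E, B c d ≤ Lam * (‖c‖ ^ 2 + ‖d‖ ^ 2) / 2 := by
    intro c d
    have hexp : B (c + d) (c + d) - B (c - d) (c - d) = 4 * B c d := by
      have hs := hsymm d c
      simp only [map_add, map_sub, ContinuousLinearMap.add_apply,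
        ContinuousLinearMap.sub_apply]
      linarith
    have h1 := hupp (c + d)
    have h2 := hlow (c - d)
    have hpar : ‖c + d‖ ^ 2 + ‖c - d‖ ^ 2 = 2 * (‖c‖ ^ 2 + ‖d‖ ^ 2) := by
      have e1 := @norm_add_sq_real E _ _ c d
      have e2 := @norm_sub_sq_real E _ _ c d
      linarith
    nlinarith [sq_nonneg ‖c - d‖, sq_nonneg ‖c + d‖]
  rcases eq_or_ne a 0 with rfl | ha
  · simp
  rcases eq_or_ne b 0 with rfl | hb
  · simp
  have hna : (0:ℝ) < ‖a‖ := norm_pos_iff.2 ha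
  have hnb : (0:ℝ) < ‖b‖ := norm_pos_iff.2 hb
  set s : ℝ := Real.sqrt (‖b‖ / ‖a‖) with hs
  have hspos : 0 < s := Real.sqrt_pos.2 (by positivity)
  have hs2 : s ^ 2 = ‖b‖ / ‖a‖ := Real.sq_sqrt (by positivity)
  have hBval : B (s • a) (s⁻¹ • b) = B a b := by
    simp only [map_smul, ContinuousLinearMap.smul_apply, ContinuousLinearMap.map_smul,
      smul_eq_mul]
    field_simp
  have hkey := hhalf (s • a) (s⁻¹ • b)
  rw [hBval] at hkey
  have hna2 : ‖s • a‖ ^ 2 = ‖b‖ * ‖a‖ := by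
    rw [norm_smul, Real.norm_eq_abs, abs_of_pos hspos, mul_pow, hs2]
    field_simp
  have hnb2 : ‖s⁻¹ • b‖ ^ 2 = ‖a‖ * ‖b‖ := by
    rw [norm_smul, Real.norm_eq_abs, abs_of_pos (by positivity : (0:ℝ) < s⁻¹),
      mul_pow, inv_pow, hs2]
    field_simp
  rw [hna2, hnb2] at hkey
  nlinarith



/-- Bounding the distance to the minimizer in alternating block minimization:
if `∇M(β')` vanishes on a subspace `V` and `∇M(β)` vanishes on `Vᗮ`, with
Hessian eigenvalues in `[lam, Lam]`, then `‖∇M(β)‖ ≤ Lam ‖β - β'‖` and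
`‖β - β̌‖ ≤ (Lam/lam) ‖β - β'‖`. -/
theorem alternating_minimization_bound (p : ℕ)
    (Ω : Set (EuclideanSpace ℝ (Fin p))) (hΩo : IsOpen Ω) (hΩc : Convex ℝ Ω)
    (M : EuclideanSpace ℝ (Fin p) → ℝ) (hM : ContDiffOn ℝ 2 M Ω)
    (lam Lam : ℝ) (hlam : 0 < lam) (hlL : lam ≤ Lam)
    (hlow : ∀ x ∈ Ω, ∀ v : EuclideanSpace ℝ (Fin p),
      lam * ‖v‖ ^ 2 ≤ iteratedFDeriv ℝ 2 M x ![v, v])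
    (hupp : ∀ x ∈ Ω, ∀ v : EuclideanSpace ℝ (Fin p),
      iteratedFDeriv ℝ 2 M x ![v, v] ≤ Lam * ‖v‖ ^ 2)
    (βcheck : EuclideanSpace ℝ (Fin p)) (hcheckmem : βcheck ∈ Ω)
    (hmin : ∀ x ∈ Ω, M βcheck ≤ M x)
    (huniq : ∀ x ∈ Ω, (∀ y ∈ Ω, M x ≤ M y) → x = βcheck)
    (β β' : EuclideanSpace ℝ (Fin p)) (hβ : β ∈ Ω) (hβ' : β' ∈ Ω)
    (hdecr : M β' ≤ M β)
    (V : Submodule ℝ (EuclideanSpace ℝ (Fin p)))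
    (hg' : ∀ v ∈ V, (inner ℝ (gradient M β') v : ℝ) = 0)
    (hg : ∀ v ∈ Vᗮ, (inner ℝ (gradient M β) v : ℝ) = 0) :
    ‖gradient M β‖ ≤ Lam * ‖β - β'‖ ∧
      ‖β - βcheck‖ ≤ (Lam / lam) * ‖β - β'‖ := by
  -- gradient vs fderiv
  have hgrad : ∀ (x v : EuclideanSpace ℝ (Fin p)), (inner ℝ (gradient M x) v : ℝ) = fderiv ℝ M x v := by
    intro x v
    unfold gradient
    exact InnerProductSpace.toDual_symm_apply
  -- bounds on the second derivative as a bilinear map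
  have hBlow : ∀ z ∈ Ω, ∀ v : EuclideanSpace ℝ (Fin p), lam * ‖v‖ ^ 2 ≤ fderiv ℝ (fderiv ℝ M) z v v := by
    intro z hz v
    have := hlow z hz v
    rwa [iteratedFDeriv_two_apply] at this
  have hBupp : ∀ z ∈ Ω, ∀ v : EuclideanSpace ℝ (Fin p), fderiv ℝ (fderiv ℝ M) z v v ≤ Lam * ‖v‖ ^ 2 := by
    intro z hz v
    have := hupp z hz v
    rwa [iteratedFDeriv_two_apply] at this
  have hBsymm : ∀ z ∈ Ω, ∀ a b : EuclideanSpace ℝ (Fin p),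
      fderiv ℝ (fderiv ℝ M) z a b = fderiv ℝ (fderiv ℝ M) z b a := by
    intro z hz a b
    exact (hM.contDiffAt (hΩo.mem_nhds hz)).isSymmSndFDerivAt (by norm_num) a b
  have hBoff : ∀ z ∈ Ω, ∀ a b : EuclideanSpace ℝ (Fin p),
      fderiv ℝ (fderiv ℝ M) z a b ≤ Lam * (‖a‖ * ‖b‖) :=
    fun z hz => bilin_bound hlam.le hlL (hBsymm z hz) (hBlow z hz) (hBupp z hz)
  -- Claim 1
  set u := gradient M β with hu
  have huV : u ∈ V := by
    rw [← Submodule.orthogonal_orthogonal V]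
    rw [Submodule.mem_orthogonal]
    intro w hw
    rw [real_inner_comm]
    exact hg w hw
  obtain ⟨z, hz, hzeq⟩ := mvt_fderiv hΩo hΩc hM hβ' hβ u
  have h0' : fderiv ℝ M β' u = 0 := by rw [← hgrad β' u]; exact hg' u huV
  have hsq : ‖u‖ ^ 2 = fderiv ℝ M β u := by
    rw [← hgrad β u, real_inner_self_eq_norm_sq]
  have hkey1 : ‖u‖ ^ 2 ≤ Lam * (‖β - β'‖ * ‖u‖) := by
    calc ‖u‖ ^ 2 = fderiv ℝ M β u - fderiv ℝ M β' u := by rw [hsq, h0']; ring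
    _ = fderiv ℝ (fderiv ℝ M) z (β - β') u := hzeq
    _ ≤ Lam * (‖β - β'‖ * ‖u‖) := hBoff z hz _ _
  have hLam : 0 ≤ Lam := hlam.le.trans hlL
  have first : ‖u‖ ≤ Lam * ‖β - β'‖ := by
    rcases eq_or_lt_of_le (norm_nonneg u) with h | h
    · rw [← h]; positivity
    · nlinarith
  refine ⟨first, ?_⟩
  -- Claim 2
  have hfd0 : fderiv ℝ M βcheck = 0 := by
    have hm : IsMinOn M Ω βcheck := isMinOn_iff.2 hmin
    exact (hm.isLocalMin (hΩo.mem_nhds hcheckmem)).fderiv_eq_zero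
  obtain ⟨z2, hz2, hzeq2⟩ := mvt_fderiv hΩo hΩc hM hcheckmem hβ (β - βcheck)
  rw [hfd0] at hzeq2
  simp only [ContinuousLinearMap.zero_apply, sub_zero] at hzeq2
  have hkey2 : lam * ‖β - βcheck‖ ^ 2 ≤ ‖u‖ * ‖β - βcheck‖ :=
    calc lam * ‖β - βcheck‖ ^ 2
        ≤ fderiv ℝ (fderiv ℝ M) z2 (β - βcheck) (β - βcheck) := hBlow z2 hz2 _
    _ = fderiv ℝ M β (β - βcheck) := hzeq2.symm
    _ = inner ℝ u (β - βcheck) := (hgrad β _).symm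
    _ ≤ ‖u‖ * ‖β - βcheck‖ := real_inner_le_norm _ _
  rcases eq_or_lt_of_le (norm_nonneg (β - βcheck)) with h | h
  · rw [← h]; positivity
  · have h3 : lam * ‖β - βcheck‖ ≤ ‖u‖ := by nlinarith
    have h4 : lam * ‖β - βcheck‖ ≤ Lam * ‖β - β'‖ := h3.trans first
    rw [div_mul_eq_mul_div, le_div_iff₀ hlam]
    linarith
end
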